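/- Fix 0 < p < 1 and let F_p(α) = p²α^{−2} + 2p(2−p) + (2−p)²α² − 4(α^{−p} + α^{2−p} − 1). Then the equation F_p′(α) = 0 has exactly one solution in the open interval (0,1), namely α = √(p/(2−p)). -/

import Mathlib

/-!
Writing `F_p'(α)` over the common denominator `α³` it factors as
`2α⁻³ ((2-p)α² - p) ((2-p)α² + p - 2α^{2-p})`. The last factor is positive for `α ≠ 1` by the
strict weighted AM–GM inequality `(α²)^{(2-p)/2} · 1^{p/2} < (2-p)/2 · α² + p/2`, so the only zero
of `F_p'` on `(0,1)` is the zero `√(p/(2-p))` of the middle factor.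
-/

/-- The function `F_p(α) = p²α^{-2} + 2p(2-p) + (2-p)²α² - 4(α^{-p} + α^{2-p} - 1)`. -/
noncomputable def Fp (p a : ℝ) : ℝ :=
  p ^ 2 * a ^ (-2 : ℝ) + 2 * p * (2 - p) + (2 - p) ^ 2 * a ^ 2
    - 4 * (a ^ (-p) + a ^ (2 - p) - 1)

/-- The derivative `F_p'(α) = -2p²α^{-3} + 2(2-p)²α + 4pα^{-p-1} - 4(2-p)α^{1-p}`. -/
noncomputable def Fp' (p a : ℝ) : ℝ :=
  -2 * p ^ 2 * a ^ (-3 : ℝ) + 2 * (2 - p) ^ 2 * a + 4 * p * a ^ (-p - 1)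
    - 4 * (2 - p) * a ^ (1 - p)

open Real

theorem hasDerivAt_Fp (p : ℝ) {a : ℝ} (ha : a ≠ 0) : HasDerivAt (Fp p) (Fp' p a) a := by
  have h₁ : HasDerivAt (fun x : ℝ => x ^ (-2 : ℝ)) (-2 * a ^ ((-2 : ℝ) - 1)) a :=
    hasDerivAt_rpow_const (Or.inl ha)
  have h₂ : HasDerivAt (fun x : ℝ => x ^ (-p)) (-p * a ^ (-p - 1)) a :=
    hasDerivAt_rpow_const (Or.inl ha)
  have h₃ : HasDerivAt (fun x : ℝ => x ^ (2 - p)) ((2 - p) * a ^ (2 - p - 1)) a :=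
    hasDerivAt_rpow_const (Or.inl ha)
  refine ((((h₁.const_mul (p ^ 2)).add_const (2 * p * (2 - p))).add
    ((hasDerivAt_pow 2 a).const_mul ((2 - p) ^ 2))).sub
    (((h₂.add h₃).sub_const 1).const_mul 4)).congr_deriv ?_
  rw [Fp', show (-2 : ℝ) - 1 = -3 by norm_num, show 2 - p - 1 = 1 - p by ring]
  ring

theorem Fp'_eq_mul (p : ℝ) {a : ℝ} (ha : 0 < a) :
    Fp' p a = 2 * (a ^ 3)⁻¹ * (((2 - p) * a ^ 2 - p) * ((2 - p) * a ^ 2 + p - 2 * a ^ (2 - p))) := by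
  have hneg_three : a ^ (-3 : ℝ) = (a ^ 3)⁻¹ := by
    rw [rpow_neg ha.le, show (3 : ℝ) = (3 : ℕ) by norm_num, rpow_natCast]
  have hneg_sub_one : a ^ (-p - 1) = a ^ (-p) * a⁻¹ := by
    rw [rpow_sub ha, rpow_one, div_eq_mul_inv]
  have hone_sub : a ^ (1 - p) = a * a ^ (-p) := by
    rw [sub_eq_add_neg, rpow_add ha, rpow_one]
  have htwo_sub : a ^ (2 - p) = a ^ 2 * a ^ (-p) := by
    rw [sub_eq_add_neg, rpow_add ha, show (2 : ℝ) = (2 : ℕ) by norm_num, rpow_natCast]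
  rw [Fp', hneg_three, hneg_sub_one, hone_sub, htwo_sub]
  field_simp
  ring

theorem two_mul_rpow_two_sub_lt {p a : ℝ} (hp0 : 0 < p) (hp2 : p < 2) (ha0 : 0 < a) (ha1 : a ≠ 1) :
    2 * a ^ (2 - p) < (2 - p) * a ^ 2 + p := by
  have hsq : a ^ 2 ≠ 1 := by
    rwa [Ne, pow_eq_one_iff_of_nonneg ha0.le two_ne_zero]
  have hpow : (a ^ 2) ^ ((2 - p) / 2) = a ^ (2 - p) := by
    rw [← rpow_natCast, ← rpow_mul ha0.le]
    congr 1
    push_cast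
    ring
  have amgm := (geom_mean_lt_arith_mean2_weighted_iff_of_pos (w₁ := (2 - p) / 2) (w₂ := p / 2)
    (by linarith) (by linarith) (sq_nonneg a) zero_le_one (by ring)).2 hsq
  rw [hpow, one_rpow, mul_one] at amgm
  linarith

theorem sub_eq_zero_iff_eq_sqrt {p a : ℝ} (hp0 : 0 ≤ p) (hp2 : p < 2) (ha : 0 ≤ a) :
    (2 - p) * a ^ 2 - p = 0 ↔ a = √(p / (2 - p)) := by
  have h2p : 0 < 2 - p := by linarith
  rw [eq_comm (a := a), sqrt_eq_iff_eq_sq (div_nonneg hp0 h2p.le) ha, div_eq_iff h2p.ne',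
    sub_eq_zero, mul_comm, eq_comm]

theorem Fp_deriv_unique_zero (p : ℝ) (hp0 : 0 < p) (hp1 : p < 1) :
    (∀ a ∈ Set.Ioo (0 : ℝ) 1, HasDerivAt (Fp p) (Fp' p a) a)
    ∧ ∀ a ∈ Set.Ioo (0 : ℝ) 1, (Fp' p a = 0 ↔ a = Real.sqrt (p / (2 - p))) := by
  refine ⟨fun a ha => hasDerivAt_Fp p ha.1.ne', fun a ⟨ha0, ha1⟩ => ?_⟩
  have hpos : 0 < (2 - p) * a ^ 2 + p - 2 * a ^ (2 - p) := by
    linarith [two_mul_rpow_two_sub_lt hp0 (by linarith) ha0 ha1.ne]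
  rw [Fp'_eq_mul p ha0, ← sub_eq_zero_iff_eq_sqrt hp0.le (by linarith) ha0.le]
  simp [ha0.ne', hpos.ne']
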